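/- (Corollary 1, regret part) For IM-OCP with decaying step sizes η_t = c·t^{−β}, where c > 0 and β ∈ (0,1), and independent Bernoulli feedback indicators, if D is a constant such that B_R(u, r_t) ≤ D almost surely for all 1 ≤ t ≤ T, where u is any minimizer of Σ_{t=1}^T ℓ_{1−α}(·, r*_t), then the expected regret satisfies E[ Σ_{t=1}^T ℓ_{1−α}(r_t, r*_t)·obs_t/p_t ] − min_{v ∈ ℝ} Σ_{t=1}^T ℓ_{1−α}(v, r*_t) ≤ (D/c)·T^{β} + (c/(2·μ·p_min)) · ( 1 + T^{1−β}/(1−β) ), where p_min = min_{1 ≤ t ≤ T} p_t; in particular the expected regret is O(T^{max{β, 1−β}}). -/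

import Mathlib

/-!
IM-OCP is online mirror descent driven by the importance-weighted subgradients
`g_t = (α - E_t) · obs_t / p_t` of the pinball losses. Against the comparator `u`, convexity of
the pinball loss, the three-point identity for Bregman divergences and the `μ`-strong convexity
of `R` bound the weighted regret of step `t` by
`(B_R(u, r_t) - B_R(u, r_{t+1})) / η_t + η_t g_t² / (2μ)`.
Since `1/η_t` is nondecreasing and `B_R(u, r_t) ≤ D`, summation by parts bounds the first terms
by `D / η_T = (D/c) T^β`. In expectation `obs_t / p_t` has mean `1` and `g_t²` has mean at most
`1/p_t`, so the remaining terms contribute at most `(c / (2 μ p_min)) Σ_{t ≤ T} t^{-β}`, and Bernoulli's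
inequality compares `t^{-β}` with the increments of `t^{1-β} / (1-β)`.
-/

open MeasureTheory ProbabilityTheory

/-- The quantile (pinball) loss `ℓ_{1-α}(r, s) = (α - 1{r < s})(r - s)`. -/
noncomputable def pinball (α r s : ℝ) : ℝ := (α - if r < s then 1 else 0) * (r - s)

open Finset

theorem pinball_nonneg {α : ℝ} (hα : α ∈ Set.Icc (0 : ℝ) 1) (r s : ℝ) : 0 ≤ pinball α r s := by
  unfold pinball
  split_ifs with h
  · exact mul_nonneg_of_nonpos_of_nonpos (by linarith [hα.2]) (by linarith)
  · exact mul_nonneg (by linarith [hα.1]) (by linarith)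

theorem pinball_sub_le (α r s v : ℝ) :
    pinball α r s - pinball α v s ≤ (α - if r < s then 1 else 0) * (r - v) := by
  unfold pinball
  split_ifs <;> nlinarith

theorem measurable_pinball (α s : ℝ) : Measurable fun r => pinball α r s :=
  (measurable_const.sub (Measurable.ite measurableSet_Iio measurable_const measurable_const)).mul
    (measurable_id.sub_const s)

theorem add_mul_sub_le_of_hasDerivAt_of_monotone {g g' : ℝ → ℝ}
    (hg : ∀ x, HasDerivAt g (g' x) x) (hg' : Monotone g') (x y : ℝ) :
    g y + g' y * (x - y) ≤ g x := by
  have hcont : ∀ a b : ℝ, ContinuousOn g (Set.Icc a b) :=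
    fun a b => HasDerivAt.continuousOn fun z _ => hg z
  rcases lt_trichotomy x y with hxy | rfl | hxy
  · obtain ⟨ξ, hξ, hslope⟩ := exists_hasDerivAt_eq_slope g g' hxy (hcont x y) fun z _ => hg z
    have h := hg' hξ.2.le
    rw [hslope, div_le_iff₀ (sub_pos.2 hxy)] at h
    linarith
  · simp
  · obtain ⟨ξ, hξ, hslope⟩ := exists_hasDerivAt_eq_slope g g' hxy (hcont y x) fun z _ => hg z
    have h := hg' hξ.1.le
    rw [hslope, le_div_iff₀ (sub_pos.2 hxy)] at h
    linarith

def bregman (R R' : ℝ → ℝ) (u v : ℝ) : ℝ := R u - R v - R' v * (u - v)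

section Bregman

variable {R R' : ℝ → ℝ} {μ : ℝ}

theorem mul_sq_le_bregman (hR : ∀ x, HasDerivAt R (R' x) x)
    (hsc : ∀ x y, (R' x - R' y) * (x - y) ≥ μ * (x - y) ^ 2) (u v : ℝ) :
    μ / 2 * (u - v) ^ 2 ≤ bregman R R' u v := by
  -- `R - μ/2 · x²` has the monotone derivative `R' - μ · x`, so it lies above its tangents.
  have hg : ∀ x, HasDerivAt (fun z => R z - μ / 2 * z ^ 2) (R' x - μ * x) x := fun x =>
    ((hR x).sub ((hasDerivAt_pow 2 x).const_mul (μ / 2))).congr_deriv (by ring)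
  have hmono : Monotone fun x => R' x - μ * x := by
    intro x y hxy
    rcases hxy.eq_or_lt with rfl | hxy
    · rfl
    · have h := hsc y x
      have h' : 0 ≤ (R' y - μ * y - (R' x - μ * x)) * (y - x) := by nlinarith
      exact sub_nonneg.1 (nonneg_of_mul_nonneg_left h' (sub_pos.2 hxy))
  have := add_mul_sub_le_of_hasDerivAt_of_monotone hg hmono u v
  unfold bregman
  nlinarith

theorem mirror_step_le (hR : ∀ x, HasDerivAt R (R' x) x)
    (hsc : ∀ x y, (R' x - R' y) * (x - y) ≥ μ * (x - y) ^ 2) (hμ : 0 < μ)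
    {η G a b : ℝ} (hη : 0 < η) (hupd : R' b = R' a - η * G) (u : ℝ) :
    G * (a - u) ≤ η⁻¹ * (bregman R R' u a - bregman R R' u b) + η * G ^ 2 / (2 * μ) := by
  have three_point : bregman R R' u a - bregman R R' u b = bregman R R' b a + η * G * (b - u) := by
    unfold bregman; rw [hupd]; ring
  have young : G * (a - b) ≤ η⁻¹ * (μ / 2 * (b - a) ^ 2) + η * G ^ 2 / (2 * μ) := by
    have key : 0 ≤ (μ * (a - b) - η * G) ^ 2 / (2 * η * μ) := by positivity
    have expand : (μ * (a - b) - η * G) ^ 2 / (2 * η * μ)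
        = η⁻¹ * (μ / 2 * (b - a) ^ 2) + η * G ^ 2 / (2 * μ) - G * (a - b) := by
      field_simp; ring
    linarith
  have hB := mul_le_mul_of_nonneg_left (mul_sq_le_bregman hR hsc b a) (inv_nonneg.2 hη.le)
  have cancel : η⁻¹ * (η * G * (b - u)) = G * (b - u) := by field_simp
  rw [three_point, mul_add, cancel]
  linarith

theorem pinball_sub_mul_le_bregman_sub (hR : ∀ x, HasDerivAt R (R' x) x)
    (hsc : ∀ x y, (R' x - R' y) * (x - y) ≥ μ * (x - y) ^ 2) (hμ : 0 < μ)
    {α η p o a b : ℝ} (hα : α ∈ Set.Icc (0 : ℝ) 1) (hη : 0 < η) (hp : 0 < p)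
    (ho : o = 0 ∨ o = 1) (s u : ℝ)
    (hupd : R' b = R' a - η * (α - if a < s then 1 else 0) * o / p) :
    (pinball α a s - pinball α u s) * (o / p) ≤
      η⁻¹ * (bregman R R' u a - bregman R R' u b) + η / (2 * μ * p ^ 2) * o := by
  set G := (α - if a < s then 1 else 0) * o / p with hG
  have hG2 : G ^ 2 ≤ o / p ^ 2 := by
    have hsq : (α - if a < s then 1 else 0) ^ 2 ≤ 1 := by
      split_ifs <;> nlinarith [hα.1, hα.2]
    rcases ho with rfl | rfl
    · simp [hG]
    · rw [hG, mul_one, div_pow]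
      exact div_le_div_of_nonneg_right hsq (by positivity)
  have ho0 : 0 ≤ o / p := div_nonneg (by rcases ho with rfl | rfl <;> norm_num) hp.le
  calc (pinball α a s - pinball α u s) * (o / p)
      ≤ (α - if a < s then 1 else 0) * (a - u) * (o / p) :=
        mul_le_mul_of_nonneg_right (pinball_sub_le α a s u) ho0
    _ = G * (a - u) := by ring
    _ ≤ η⁻¹ * (bregman R R' u a - bregman R R' u b) + η * G ^ 2 / (2 * μ) :=
        mirror_step_le hR hsc hμ hη (by rw [hupd]; ring) u
    _ ≤ η⁻¹ * (bregman R R' u a - bregman R R' u b) + η * (o / p ^ 2) / (2 * μ) := by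
        gcongr
    _ = η⁻¹ * (bregman R R' u a - bregman R R' u b) + η / (2 * μ * p ^ 2) * o := by
        field_simp

end Bregman

theorem sum_Icc_mul_sub_le {φ b : ℕ → ℝ} {D : ℝ} {T : ℕ} (hT : 1 ≤ T)
    (hφ : MonotoneOn φ (Set.Ici 1)) (hφ1 : 0 ≤ φ 1) (hb : ∀ t ∈ Icc 1 T, b t ≤ D)
    (hbT : 0 ≤ b (T + 1)) :
    ∑ t ∈ Icc 1 T, φ t * (b t - b (t + 1)) ≤ D * φ T := by
  have hφT : 0 ≤ φ T := hφ1.trans (hφ (Set.mem_Ici.2 le_rfl) (Set.mem_Ici.2 hT) hT)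
  suffices h : ∀ n, 1 ≤ n → n ≤ T →
      ∑ t ∈ Icc 1 n, φ t * (b t - b (t + 1)) + φ n * b (n + 1) ≤ D * φ n by
    nlinarith [h T hT le_rfl, mul_nonneg hφT hbT]
  intro n hn
  induction n, hn using Nat.le_induction with
  | base =>
    intro h1T
    have := mul_le_mul_of_nonneg_left (hb 1 (mem_Icc.2 ⟨le_rfl, h1T⟩)) hφ1
    simp only [Icc_self, sum_singleton]
    linarith
  | succ n hn ih =>
    intro hnT
    rw [sum_Icc_succ_top (by omega)]
    have hmono : φ n ≤ φ (n + 1) := hφ (Set.mem_Ici.2 hn) (Set.mem_Ici.2 (by omega)) (by omega)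
    have hbn := hb (n + 1) (mem_Icc.2 ⟨by omega, hnT⟩)
    nlinarith [ih (by omega), mul_le_mul_of_nonneg_left hbn (sub_nonneg.2 hmono)]

theorem pinball_regret_le {R R' : ℝ → ℝ} {μ : ℝ} (hR : ∀ x, HasDerivAt R (R' x) x)
    (hsc : ∀ x y, (R' x - R' y) * (x - y) ≥ μ * (x - y) ^ 2) (hμ : 0 < μ)
    {α : ℝ} (hα : α ∈ Set.Icc (0 : ℝ) 1) {η p o r s : ℕ → ℝ}
    (hη : ∀ t, 1 ≤ t → 0 < η t) (hη_anti : AntitoneOn η (Set.Ici 1))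
    (hp : ∀ t, 0 < p t) (ho : ∀ t, o t = 0 ∨ o t = 1)
    (hupd : ∀ t, 1 ≤ t →
      R' (r (t + 1)) = R' (r t) - η t * (α - if r t < s t then 1 else 0) * o t / p t)
    {T : ℕ} (hT : 1 ≤ T) {u D : ℝ} (hD : ∀ t ∈ Icc 1 T, bregman R R' u (r t) ≤ D) :
    ∑ t ∈ Icc 1 T, pinball α (r t) (s t) * o t / p t -
        ∑ t ∈ Icc 1 T, pinball α u (s t) * (o t / p t) ≤
      D / η T + ∑ t ∈ Icc 1 T, η t / (2 * μ * p t ^ 2) * o t := by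
  have hstep : ∀ t ∈ Icc 1 T,
      (pinball α (r t) (s t) - pinball α u (s t)) * (o t / p t) ≤
        (η t)⁻¹ * (bregman R R' u (r t) - bregman R R' u (r (t + 1))) +
          η t / (2 * μ * p t ^ 2) * o t := fun t ht =>
    pinball_sub_mul_le_bregman_sub hR hsc hμ hα (hη t (mem_Icc.1 ht).1) (hp t) (ho t) (s t) u
      (hupd t (mem_Icc.1 ht).1)
  have htel : ∑ t ∈ Icc 1 T, (η t)⁻¹ * (bregman R R' u (r t) - bregman R R' u (r (t + 1))) ≤
      D * (η T)⁻¹ :=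
    sum_Icc_mul_sub_le hT (fun a ha b hb hab => inv_anti₀ (hη b hb) (hη_anti ha hb hab))
      (inv_nonneg.2 (hη 1 le_rfl).le) hD
      ((mul_sq_le_bregman hR hsc u (r (T + 1))).trans' (by positivity))
  rw [← sum_sub_distrib]
  calc _ = ∑ t ∈ Icc 1 T, (pinball α (r t) (s t) - pinball α u (s t)) * (o t / p t) :=
        sum_congr rfl fun t _ => by ring
    _ ≤ ∑ t ∈ Icc 1 T, ((η t)⁻¹ * (bregman R R' u (r t) - bregman R R' u (r (t + 1))) +
            η t / (2 * μ * p t ^ 2) * o t) := sum_le_sum hstep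
    _ ≤ _ := by rw [sum_add_distrib, div_eq_mul_inv]; linarith

theorem antitoneOn_mul_natCast_rpow_neg {c β : ℝ} (hc : 0 ≤ c) (hβ : 0 ≤ β) :
    AntitoneOn (fun t : ℕ => c * (t : ℝ) ^ (-β)) (Set.Ici 1) := fun _ ha _ _ hab =>
  mul_le_mul_of_nonneg_left
    (Real.rpow_le_rpow_of_nonpos (Nat.cast_pos.2 ha) (Nat.cast_le.2 hab) (neg_nonpos.2 hβ)) hc

theorem one_sub_mul_rpow_neg_le {β : ℝ} (hβ0 : 0 ≤ β) (hβ1 : β ≤ 1) {t : ℝ} (ht : 0 ≤ t) :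
    (1 - β) * (t + 1) ^ (-β) ≤ (t + 1) ^ (1 - β) - t ^ (1 - β) := by
  have ht1 : 0 < t + 1 := by linarith
  have bernoulli := rpow_one_add_le_one_add_mul_self (s := -(t + 1)⁻¹)
    (by linarith [inv_le_one_of_one_le₀ (by linarith : (1 : ℝ) ≤ t + 1)])
    (p := 1 - β) (by linarith) (by linarith)
  have hfactor : t ^ (1 - β) = (t + 1) ^ (1 - β) * (1 + -(t + 1)⁻¹) ^ (1 - β) := by
    rw [← Real.mul_rpow ht1.le (by field_simp; linarith)]
    congr 1
    field_simp
    ring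
  have hneg : (t + 1) ^ (-β) = (t + 1) ^ (1 - β) * (t + 1)⁻¹ := by
    rw [← div_eq_mul_inv, ← Real.rpow_sub_one ht1.ne']
    ring_nf
  rw [hfactor, hneg]
  nlinarith [mul_le_mul_of_nonneg_left bernoulli (Real.rpow_nonneg ht1.le (1 - β))]

theorem sum_Icc_rpow_neg_le {β : ℝ} (hβ0 : 0 ≤ β) (hβ1 : β < 1) (T : ℕ) :
    ∑ t ∈ Icc 1 T, (t : ℝ) ^ (-β) ≤ (T : ℝ) ^ (1 - β) / (1 - β) := by
  have h1β : 0 < 1 - β := by linarith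
  induction T with
  | zero => rw [Icc_eq_empty (by omega), sum_empty]; positivity
  | succ n ih =>
    rw [sum_Icc_succ_top (by omega), Nat.cast_succ]
    have hstep := one_sub_mul_rpow_neg_le hβ0 hβ1.le (Nat.cast_nonneg n)
    rw [le_div_iff₀ h1β] at ih ⊢
    nlinarith

section Probability

theorem eq_indicator_one_of_zero_or_one {Ω : Type*} {X : Ω → ℝ} (h01 : ∀ ω, X ω = 0 ∨ X ω = 1) :
    X = {ω | X ω = 1}.indicator 1 := by
  ext ω
  rcases h01 ω with h | h <;> simp [Set.indicator, h]

variable {Ω : Type*} [MeasurableSpace Ω] {P : Measure Ω}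

theorem integrable_of_zero_or_one [IsFiniteMeasure P] {X : Ω → ℝ} (hX : Measurable X)
    (h01 : ∀ ω, X ω = 0 ∨ X ω = 1) : Integrable X P := by
  rw [eq_indicator_one_of_zero_or_one h01]
  exact (integrable_const 1).indicator (hX (measurableSet_singleton 1))

theorem integral_of_zero_or_one {X : Ω → ℝ} (hX : Measurable X)
    (h01 : ∀ ω, X ω = 0 ∨ X ω = 1) : ∫ ω, X ω ∂P = P.real {ω | X ω = 1} := by
  conv_lhs => rw [eq_indicator_one_of_zero_or_one h01]
  exact integral_indicator_one (hX (measurableSet_singleton 1))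

theorem integral_sub_le_of_ae_sub_le {F H K : Ω → ℝ} (hF : AEStronglyMeasurable F P)
    (hF0 : 0 ≤ᵐ[P] F) (hH : Integrable H P) (hK : Integrable K P)
    (hFHK : ∀ᵐ ω ∂P, F ω - H ω ≤ K ω) :
    ∫ ω, F ω ∂P - ∫ ω, H ω ∂P ≤ ∫ ω, K ω ∂P := by
  have hFint : Integrable F P := (hH.add hK).mono' hF <| by
    filter_upwards [hF0, hFHK] with ω h0 h
    rw [Real.norm_eq_abs, abs_of_nonneg h0, Pi.add_apply]
    linarith
  rw [← integral_sub hFint hH]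
  exact integral_mono_ae (hFint.sub hH) hK hFHK

theorem integral_sub_sum_le_of_zero_or_one [IsProbabilityMeasure P] {ι : Type*} (s : Finset ι)
    {X : ι → Ω → ℝ} {q a b : ι → ℝ} {F : Ω → ℝ} {d : ℝ} (hX : ∀ i, Measurable (X i))
    (h01 : ∀ i ω, X i ω = 0 ∨ X i ω = 1) (hq : ∀ i, 0 < q i)
    (hXq : ∀ i, P {ω | X i ω = 1} = ENNReal.ofReal (q i))
    (hF : AEStronglyMeasurable F P) (hF0 : 0 ≤ᵐ[P] F)
    (hFX : ∀ᵐ ω ∂P, F ω - ∑ i ∈ s, a i * (X i ω / q i) ≤ d + ∑ i ∈ s, b i * X i ω) :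
    ∫ ω, F ω ∂P - ∑ i ∈ s, a i ≤ d + ∑ i ∈ s, b i * q i := by
  have hint (c : ι → ℝ) : Integrable (fun ω => ∑ i ∈ s, c i * X i ω) P :=
    integrable_finsetSum _ fun i _ => (integrable_of_zero_or_one (hX i) (h01 i)).const_mul _
  have hmean (c : ι → ℝ) : ∫ ω, ∑ i ∈ s, c i * X i ω ∂P = ∑ i ∈ s, c i * q i := by
    refine (integral_finsetSum _ fun i _ =>
      (integrable_of_zero_or_one (hX i) (h01 i)).const_mul _).trans (sum_congr rfl fun i _ => ?_)
    rw [integral_const_mul, integral_of_zero_or_one (hX i) (h01 i), measureReal_def, hXq i,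
      ENNReal.toReal_ofReal (hq i).le]
  have hweight (ω : Ω) : ∑ i ∈ s, a i * (X i ω / q i) = ∑ i ∈ s, a i / q i * X i ω :=
    sum_congr rfl fun i _ => by ring
  have h := integral_sub_le_of_ae_sub_le (K := fun ω => d + ∑ i ∈ s, b i * X i ω) hF hF0
    (hint fun i => a i / q i) ((integrable_const d).add (hint b))
    (by simpa only [hweight] using hFX)
  rwa [integral_add (integrable_const d) (hint b), hmean, hmean, integral_const, probReal_univ,
    one_smul, sum_congr rfl fun i _ => div_mul_cancel₀ (a i) (hq i).ne'] at h

end Probability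

theorem sum_mul_rpow_neg_div_le {c μ β q : ℝ} {p : ℕ → ℝ} {T : ℕ} (hc : 0 ≤ c) (hμ : 0 < μ)
    (hβ0 : 0 ≤ β) (hβ1 : β < 1) (hq : 0 < q) (hp : ∀ t ∈ Icc 1 T, q ≤ p t) :
    ∑ t ∈ Icc 1 T, c * (t : ℝ) ^ (-β) / (2 * μ * p t ^ 2) * p t ≤
      c / (2 * μ * q) * ((T : ℝ) ^ (1 - β) / (1 - β)) := by
  calc ∑ t ∈ Icc 1 T, c * (t : ℝ) ^ (-β) / (2 * μ * p t ^ 2) * p t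
      = ∑ t ∈ Icc 1 T, c / (2 * μ * p t) * (t : ℝ) ^ (-β) :=
        sum_congr rfl fun t ht => by
          have := (hq.trans_le (hp t ht)).ne'
          field_simp
    _ ≤ ∑ t ∈ Icc 1 T, c / (2 * μ * q) * (t : ℝ) ^ (-β) :=
        sum_le_sum fun t ht => by gcongr; exact hp t ht
    _ ≤ c / (2 * μ * q) * ((T : ℝ) ^ (1 - β) / (1 - β)) := by
        rw [← mul_sum]
        gcongr
        exact sum_Icc_rpow_neg_le hβ0 hβ1 T

theorem imocp_corollary_regret_general
    {Ω : Type*} [MeasurableSpace Ω] (Pr : Measure Ω) [IsProbabilityMeasure Pr]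
    (α μ D c β : ℝ) (hα : α ∈ Set.Icc (0 : ℝ) 1) (hμ : 0 < μ)
    (hc : 0 < c) (hβ : β ∈ Set.Ioo (0 : ℝ) 1)
    (rstar p : ℕ → ℝ)
    (hp : ∀ t, p t ∈ Set.Ioc (0 : ℝ) 1)
    (obs : ℕ → Ω → ℝ)
    (hobsmeas : ∀ t, Measurable (obs t))
    (hobs01 : ∀ t ω, obs t ω = 0 ∨ obs t ω = 1)
    (hobsp : ∀ t, Pr {ω | obs t ω = 1} = ENNReal.ofReal (p t))
    (R R' : ℝ → ℝ)
    (hR : ∀ x, HasDerivAt R (R' x) x)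
    (hsc : ∀ x y, (R' x - R' y) * (x - y) ≥ μ * (x - y) ^ 2)
    (r E : ℕ → Ω → ℝ)
    (hrmeas : ∀ t, Measurable (r t))
    (hE : ∀ t ω, E t ω = if rstar t > r t ω then 1 else 0)
    (hupd : ∀ t, 1 ≤ t → ∀ ω,
      R' (r (t + 1) ω) =
        R' (r t ω) - c * (t : ℝ) ^ (-β) * (α - E t ω) * obs t ω / p t)
    (T : ℕ) (hT : 1 ≤ T)
    (u : ℝ)
    (hD : ∀ t ∈ Finset.Icc 1 T, ∀ᵐ ω ∂Pr,
      R u - R (r t ω) - R' (r t ω) * (u - r t ω) ≤ D) :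
    (∫ ω, ∑ t ∈ Finset.Icc 1 T, pinball α (r t ω) (rstar t) * obs t ω / p t ∂Pr) -
        ∑ t ∈ Finset.Icc 1 T, pinball α u (rstar t) ≤
      (D / c) * (T : ℝ) ^ β +
        (c / (2 * μ * ((Finset.Icc 1 T).inf' (Finset.nonempty_Icc.mpr hT) p))) *
          (1 + (T : ℝ) ^ (1 - β) / (1 - β)) := by
  have hη (t : ℕ) (ht : 1 ≤ t) : 0 < c * (t : ℝ) ^ (-β) :=
    mul_pos hc (Real.rpow_pos_of_pos (Nat.cast_pos.2 ht) _)
  have hpath : ∀ᵐ ω ∂Pr,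
      ∑ t ∈ Icc 1 T, pinball α (r t ω) (rstar t) * obs t ω / p t -
          ∑ t ∈ Icc 1 T, pinball α u (rstar t) * (obs t ω / p t) ≤
        D / (c * (T : ℝ) ^ (-β)) +
          ∑ t ∈ Icc 1 T, c * (t : ℝ) ^ (-β) / (2 * μ * p t ^ 2) * obs t ω := by
    filter_upwards [(Finset.eventually_all _).2 hD] with ω hω
    refine pinball_regret_le hR hsc hμ hα hη (antitoneOn_mul_natCast_rpow_neg hc.le hβ.1.le)
      (fun t => (hp t).1) (fun t => hobs01 t ω) (fun t ht => ?_) hT hω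
    rw [hupd t ht ω, hE t ω]
  have hF_meas : Measurable fun ω => ∑ t ∈ Icc 1 T, pinball α (r t ω) (rstar t) * obs t ω / p t :=
    Finset.measurable_sum _ fun t _ =>
      (((measurable_pinball α (rstar t)).comp (hrmeas t)).mul (hobsmeas t)).div_const _
  have hF_nonneg (ω : Ω) : 0 ≤ ∑ t ∈ Icc 1 T, pinball α (r t ω) (rstar t) * obs t ω / p t :=
    sum_nonneg fun t _ => div_nonneg (mul_nonneg (pinball_nonneg hα _ _)
      (by rcases hobs01 t ω with h | h <;> simp [h])) (hp t).1.le
  have hexp := integral_sub_sum_le_of_zero_or_one (Icc 1 T) hobsmeas hobs01 (fun t => (hp t).1)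
    hobsp hF_meas.aestronglyMeasurable (Filter.Eventually.of_forall hF_nonneg) hpath
  have hDterm : D / (c * (T : ℝ) ^ (-β)) = D / c * (T : ℝ) ^ β := by
    rw [Real.rpow_neg (Nat.cast_nonneg T)]
    field_simp
  have hpmin : 0 < (Icc 1 T).inf' (nonempty_Icc.mpr hT) p := (lt_inf'_iff _).2 fun t _ => (hp t).1
  have hvar := sum_mul_rpow_neg_div_le hc.le hμ hβ.1.le hβ.2 hpmin fun t ht => inf'_le p ht
  have : 0 ≤ c / (2 * μ * (Icc 1 T).inf' (nonempty_Icc.mpr hT) p) := by positivity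
  rw [mul_add, mul_one]
  linarith

/-- Corollary 1 (regret part): for IM-OCP with decaying step sizes `η_t = c t^{-β}`,
`β ∈ (0,1)`, and independent Bernoulli feedback, if `u` minimizes the cumulative quantile
loss and `B_R(u, r_t) ≤ D` almost surely for `1 ≤ t ≤ T`, then the expected regret is at
most `(D/c) T^β + (c/(2 μ p_min)) (1 + T^{1-β}/(1-β))`, which is `O(T^{max{β,1-β}})`. -/
theorem imocp_corollary_regret
    {Ω : Type*} [MeasurableSpace Ω] (Pr : Measure Ω) [IsProbabilityMeasure Pr]
    (B α μ D c β : ℝ) (hB : 0 < B) (hα : α ∈ Set.Icc (0 : ℝ) 1) (hμ : 0 < μ)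
    (hc : 0 < c) (hβ : β ∈ Set.Ioo (0 : ℝ) 1)
    (rstar p : ℕ → ℝ)
    (hrstar : ∀ t, rstar t ∈ Set.Icc 0 B)
    (hp : ∀ t, p t ∈ Set.Ioc (0 : ℝ) 1)
    (obs : ℕ → Ω → ℝ)
    (hobsmeas : ∀ t, Measurable (obs t))
    (hobs01 : ∀ t ω, obs t ω = 0 ∨ obs t ω = 1)
    (hindep : iIndepFun obs Pr)
    (hobsp : ∀ t, Pr {ω | obs t ω = 1} = ENNReal.ofReal (p t))
    (R R' : ℝ → ℝ)
    (hR : ∀ x, HasDerivAt R (R' x) x)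
    (hbij : Function.Bijective R')
    (hsc : ∀ x y, (R' x - R' y) * (x - y) ≥ μ * (x - y) ^ 2)
    (r E : ℕ → Ω → ℝ)
    (hrmeas : ∀ t, Measurable (r t))
    (hE : ∀ t ω, E t ω = if rstar t > r t ω then 1 else 0)
    (hr1 : ∀ ω, r 1 ω ∈ Set.Icc 0 B)
    (hupd : ∀ t, 1 ≤ t → ∀ ω,
      R' (r (t + 1) ω) =
        R' (r t ω) - c * (t : ℝ) ^ (-β) * (α - E t ω) * obs t ω / p t)
    (T : ℕ) (hT : 1 ≤ T)
    (u : ℝ)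
    (hu : ∀ v : ℝ, ∑ t ∈ Finset.Icc 1 T, pinball α u (rstar t) ≤
      ∑ t ∈ Finset.Icc 1 T, pinball α v (rstar t))
    (hD : ∀ t ∈ Finset.Icc 1 T, ∀ᵐ ω ∂Pr,
      R u - R (r t ω) - R' (r t ω) * (u - r t ω) ≤ D) :
    (∫ ω, ∑ t ∈ Finset.Icc 1 T, pinball α (r t ω) (rstar t) * obs t ω / p t ∂Pr) -
        ∑ t ∈ Finset.Icc 1 T, pinball α u (rstar t) ≤
      (D / c) * (T : ℝ) ^ β +
        (c / (2 * μ * ((Finset.Icc 1 T).inf' (Finset.nonempty_Icc.mpr hT) p))) *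
          (1 + (T : ℝ) ^ (1 - β) / (1 - β)) :=
  imocp_corollary_regret_general Pr α μ D c β hα hμ hc hβ rstar p hp obs hobsmeas hobs01 hobsp R R'
    hR hsc r E hrmeas hE hupd T hT u hD
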